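/- arXiv:1908.06077 — 2 statements merged into one kernel-verified Lean document; each statement's English description precedes it below -/
import Mathlib

section
/- Let d ≥ 1 and s ≥ 1 be integers with 2^{2s} ≤ d, and let v ∈ ℝ^d be nonzero. The nonuniform quantization of v with the NUQSGD levels L̂ satisfies E[‖Q_s(v) − v‖²] ≤ ‖v‖² · ( min{ 2^{−2s}(d − 2^{2s})/4 , 2^{−s}·√(d − 2^{2s}) } + 3(s−1)/16 + 1/4 ). -/
/-!
Averaging over the uniform noise, coordinate `i` contributes `‖v‖² (rᵢ - l_ℓ)(l_{ℓ+1} - rᵢ)`, the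
variance of the two-point rounding of `rᵢ = |vᵢ|/‖v‖`. For the exponential levels every bin except
the first has width equal to its left end, so there the variance is at most `rᵢ²/4`, while on the
first bin `[0, 2^{-s}]` it equals `2^{-s} rᵢ - rᵢ²`. Summing the uniform bound
`2^{-2s}/4 + 3(s-1)/16 · rᵢ²` gives the first term of the minimum. For the second, Cauchy–Schwarz
bounds the sum of the `rᵢ` in the first bin by `√(dρ)`, `ρ` being their squared mass, and
`√(dρ)/2^s - ρ ≤ √(d - 2^{2s})/2^s` as soon as `2^s ≤ 2√(d - 2^{2s})`; otherwise the first term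
of the minimum is the smaller one.
-/

open MeasureTheory Real

noncomputable section

/-- The index of the quantization bin containing the normalized coordinate `r`. -/
def levIdx (l : ℕ → ℝ) (s : ℕ) (r : ℝ) : ℕ := sSup {j | j ≤ s ∧ l j ≤ r}

/-- The probability of rounding the normalized coordinate `r` up to the next level. -/
def quantP (l : ℕ → ℝ) (s : ℕ) (r : ℝ) : ℝ :=
  (r - l (levIdx l s r)) / (l (levIdx l s r + 1) - l (levIdx l s r))

/-- The (random) nonuniform quantization of `v`, driven by the uniform noise vector `u`:
coordinate `i` is `‖v‖ · sign vᵢ · hᵢ`, where `hᵢ` is the upper adjacent level with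
probability `p(rᵢ)` and the lower adjacent level otherwise. -/
def quant (l : ℕ → ℝ) (s : ℕ) {d : ℕ} (v : EuclideanSpace ℝ (Fin d))
    (u : Fin d → ℝ) : EuclideanSpace ℝ (Fin d) :=
  WithLp.toLp 2 fun i =>
    ‖v‖ * Real.sign (v i) *
      (if u i ≤ quantP l s (|v i| / ‖v‖)
       then l (levIdx l s (|v i| / ‖v‖) + 1)
       else l (levIdx l s (|v i| / ‖v‖)))

/-- The uniform probability measure on the cube `[0,1]^d`, driving the quantization noise. -/
def unifCube (d : ℕ) : Measure (Fin d → ℝ) :=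
  Measure.pi fun _ => volume.restrict (Set.Icc (0:ℝ) 1)

/-- `l` is a valid sequence of quantization levels `l 0 = 0 < l 1 < ⋯ < l (s+1) = 1`. -/
def IsLevels (l : ℕ → ℝ) (s : ℕ) : Prop :=
  l 0 = 0 ∧ l (s+1) = 1 ∧ ∀ j ≤ s, l j < l (j+1)

/-- The exponentially spaced NUQSGD levels `(0, 2^{-s}, 2^{1-s}, …, 2^{-1}, 1)`:
`l 0 = 0` and `l j = 2^{j-1-s}` for `j = 1, …, s+1`. -/
def nuqLevels (s : ℕ) : ℕ → ℝ :=
  fun j => if j = 0 then 0 else 2 ^ ((j : ℤ) - 1 - (s : ℤ))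

/-- The variance of the unbiased random rounding of `r` to one of its two adjacent levels. -/
def levelVariance (l : ℕ → ℝ) (s : ℕ) (r : ℝ) : ℝ :=
  (r - l (levIdx l s r)) * (l (levIdx l s r + 1) - r)

lemma levIdx_le (l : ℕ → ℝ) (s : ℕ) (r : ℝ) : levIdx l s r ≤ s :=
  csSup_le' fun _ hj => hj.1

lemma bddAbove_levIdx_set (l : ℕ → ℝ) (s : ℕ) (r : ℝ) : BddAbove {j | j ≤ s ∧ l j ≤ r} :=
  ⟨s, fun _ hj => hj.1⟩

namespace IsLevels

variable {l : ℕ → ℝ} {s : ℕ} {r : ℝ}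

lemma nonneg (hl : IsLevels l s) : ∀ j ≤ s + 1, 0 ≤ l j
  | 0, _ => hl.1.ge
  | j + 1, hj => (hl.nonneg j (by omega)).trans (hl.2.2 j (by omega)).le

lemma level_levIdx_le (hl : IsLevels l s) (hr : 0 ≤ r) : l (levIdx l s r) ≤ r :=
  (Nat.sSup_mem (s := {j | j ≤ s ∧ l j ≤ r}) ⟨0, Nat.zero_le s, hl.1.trans_le hr⟩
    (bddAbove_levIdx_set l s r)).2

lemma le_level_levIdx_succ (hl : IsLevels l s) (hr : r ≤ 1) : r ≤ l (levIdx l s r + 1) := by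
  rcases (levIdx_le l s r).eq_or_lt with hs | hs
  · rw [hs, hl.2.1]; exact hr
  · by_contra! h
    have := le_csSup (bddAbove_levIdx_set l s r) ⟨hs, h.le⟩
    exact (Nat.lt_succ_self _).not_ge this

lemma level_levIdx_lt (hl : IsLevels l s) : l (levIdx l s r) < l (levIdx l s r + 1) :=
  hl.2.2 _ (levIdx_le l s r)

lemma levelVariance_zero (hl : IsLevels l s) : levelVariance l s 0 = 0 := by
  have : l (levIdx l s 0) = 0 :=
    le_antisymm (hl.level_levIdx_le le_rfl) (hl.nonneg _ (by have := levIdx_le l s 0; omega))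
  simp [levelVariance, this]

end IsLevels

lemma integral_Icc_ite_le {p : ℝ} (hp0 : 0 ≤ p) (hp1 : p ≤ 1) (a b : ℝ) :
    ∫ t in Set.Icc (0:ℝ) 1, (if t ≤ p then a else b) = p * a + (1 - p) * b := by
  have hfun : (fun t : ℝ => if t ≤ p then a else b) =
      fun t => (Set.Iic p).indicator (fun _ => a - b) t + b := by
    funext t; by_cases h : t ≤ p <;> simp [Set.indicator, h]
  have hset : Set.Iic p ∩ Set.Icc 0 1 = Set.Icc 0 p := by
    ext t
    simp only [Set.mem_inter_iff, Set.mem_Iic, Set.mem_Icc]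
    exact ⟨fun h => ⟨h.2.1, h.1⟩, fun h => ⟨h.2, h.1, h.2.trans hp1⟩⟩
  rw [hfun, integral_add (integrable_const _ |>.indicator measurableSet_Iic) (integrable_const b),
    integral_indicator_const _ measurableSet_Iic, integral_const,
    measureReal_restrict_apply measurableSet_Iic, measureReal_restrict_apply_univ, hset,
    Real.volume_real_Icc_of_le hp0, Real.volume_real_Icc_of_le zero_le_one]
  simp only [sub_zero, smul_eq_mul]
  ring

instance : IsProbabilityMeasure (volume.restrict (Set.Icc (0:ℝ) 1)) :=
  ⟨by simp⟩

instance (d : ℕ) : IsProbabilityMeasure (unifCube d) := by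
  unfold unifCube; infer_instance

lemma integrable_unifCube_ite_le {d : ℕ} (i : Fin d) (p a b : ℝ) :
    Integrable (fun u : Fin d → ℝ => if u i ≤ p then a else b) (unifCube d) :=
  .of_bound (Measurable.ite (measurableSet_le (measurable_pi_apply i) measurable_const)
    measurable_const measurable_const).aestronglyMeasurable (max ‖a‖ ‖b‖)
    (ae_of_all _ fun u => by split_ifs; exacts [le_max_left _ _, le_max_right _ _])

lemma two_point_variance {a b r : ℝ} (hab : a < b) :
    (r - a) / (b - a) * (b - r) ^ 2 + (1 - (r - a) / (b - a)) * (a - r) ^ 2 =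
      (r - a) * (b - r) := by
  have : b - a ≠ 0 := sub_ne_zero.2 hab.ne'
  field_simp
  ring

lemma Real.sign_mul_abs (x : ℝ) : Real.sign x * |x| = x := by
  rcases lt_trichotomy x 0 with hx | rfl | hx
  · rw [Real.sign_of_neg hx, abs_of_neg hx]; ring
  · simp
  · rw [Real.sign_of_pos hx, abs_of_pos hx, one_mul]

lemma Real.sign_sq_of_ne_zero {x : ℝ} (hx : x ≠ 0) : Real.sign x ^ 2 = 1 := by
  rcases Real.sign_apply_eq_of_ne_zero x hx with h | h <;> simp [h]

section Coordinate

variable {l : ℕ → ℝ} {s d : ℕ} {v : EuclideanSpace ℝ (Fin d)}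

lemma quant_apply_sub_sq (hv : v ≠ 0) (u : Fin d → ℝ) (i : Fin d) :
    (quant l s v u i - v i) ^ 2 =
      ‖v‖ ^ 2 * Real.sign (v i) ^ 2 *
        if u i ≤ quantP l s (|v i| / ‖v‖)
        then (l (levIdx l s (|v i| / ‖v‖) + 1) - |v i| / ‖v‖) ^ 2
        else (l (levIdx l s (|v i| / ‖v‖)) - |v i| / ‖v‖) ^ 2 := by
  have hvi : v i = ‖v‖ * Real.sign (v i) * (|v i| / ‖v‖) := by
    rw [mul_div_assoc', mul_assoc, Real.sign_mul_abs,
      mul_div_cancel_left₀ _ (norm_ne_zero_iff.2 hv)]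
  conv_lhs => rw [hvi]
  simp only [quant, PiLp.toLp_apply]
  split_ifs <;> ring

lemma integral_quant_apply_sub_sq (hl : IsLevels l s) (hv : v ≠ 0) (i : Fin d) :
    ∫ u, (quant l s v u i - v i) ^ 2 ∂unifCube d = ‖v‖ ^ 2 * levelVariance l s (|v i| / ‖v‖) := by
  set r := |v i| / ‖v‖ with hr
  have hr0 : 0 ≤ r := by positivity
  have hr1 : r ≤ 1 := div_le_one_of_le₀ (PiLp.norm_apply_le v i) (norm_nonneg v)
  set a := l (levIdx l s r)
  set b := l (levIdx l s r + 1)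
  have hab : a < b := hl.level_levIdx_lt
  have hp : quantP l s r = (r - a) / (b - a) := rfl
  have hp0 : 0 ≤ (r - a) / (b - a) :=
    div_nonneg (sub_nonneg.2 (hl.level_levIdx_le hr0)) (sub_nonneg.2 hab.le)
  have hp1 : (r - a) / (b - a) ≤ 1 :=
    div_le_one_of_le₀ (by linarith [hl.le_level_levIdx_succ hr1]) (sub_nonneg.2 hab.le)
  have hsign : Real.sign (v i) ^ 2 * levelVariance l s r = levelVariance l s r := by
    by_cases hvi : v i = 0
    · rw [hr, hvi, abs_zero, zero_div, hl.levelVariance_zero, mul_zero]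
    · rw [Real.sign_sq_of_ne_zero hvi, one_mul]
  simp_rw [quant_apply_sub_sq hv, ← hr, hp]
  rw [integral_const_mul, unifCube, integral_comp_eval (Measurable.ite measurableSet_Iic
    measurable_const measurable_const).aestronglyMeasurable, integral_Icc_ite_le hp0 hp1,
    two_point_variance hab, ← hsign, mul_assoc]
  rfl

lemma integrable_quant_apply_sub_sq (hv : v ≠ 0) (i : Fin d) :
    Integrable (fun u => (quant l s v u i - v i) ^ 2) (unifCube d) := by
  simp_rw [quant_apply_sub_sq hv]
  exact (integrable_unifCube_ite_le i _ _ _).const_mul _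

lemma integral_norm_quant_sub_sq (hl : IsLevels l s) (hv : v ≠ 0) :
    ∫ u, ‖quant l s v u - v‖ ^ 2 ∂unifCube d = ‖v‖ ^ 2 * ∑ i, levelVariance l s (|v i| / ‖v‖) := by
  have hsum (u : Fin d → ℝ) : ‖quant l s v u - v‖ ^ 2 = ∑ i, (quant l s v u i - v i) ^ 2 :=
    EuclideanSpace.real_norm_sq_eq _
  simp_rw [hsum]
  rw [integral_finsetSum _ fun i _ => integrable_quant_apply_sub_sq hv i, Finset.mul_sum]
  exact Finset.sum_congr rfl fun i _ => integral_quant_apply_sub_sq hl hv i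

end Coordinate

lemma nuqLevels_zero (s : ℕ) : nuqLevels s 0 = 0 := if_pos rfl

lemma nuqLevels_succ (s j : ℕ) : nuqLevels s (j + 1) = 2 ^ j / 2 ^ s := by
  rw [nuqLevels, if_neg j.succ_ne_zero, Nat.cast_succ, add_sub_cancel_right,
    zpow_sub₀ two_ne_zero, zpow_natCast, zpow_natCast]

lemma isLevels_nuqLevels (s : ℕ) : IsLevels (nuqLevels s) s := by
  refine ⟨nuqLevels_zero s, by rw [nuqLevels_succ, div_self (by positivity)], fun j _ => ?_⟩
  cases j with
  | zero => rw [nuqLevels_zero, nuqLevels_succ]; positivity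
  | succ k =>
    rw [nuqLevels_succ, nuqLevels_succ]
    gcongr <;> norm_num

lemma levelVariance_nuqLevels_of_levIdx_eq_zero {s : ℕ} {r : ℝ}
    (h : levIdx (nuqLevels s) s r = 0) : levelVariance (nuqLevels s) s r = r / 2 ^ s - r ^ 2 := by
  rw [levelVariance, h, nuqLevels_zero, nuqLevels_succ, pow_zero]
  ring

lemma levelVariance_nuqLevels_of_levIdx_eq_succ {s k : ℕ} {r : ℝ}
    (h : levIdx (nuqLevels s) s r = k + 1) :
    levelVariance (nuqLevels s) s r ≤ (2 ^ k / 2 ^ s) ^ 2 / 4 := by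
  have hgap : nuqLevels s (k + 1 + 1) = 2 * nuqLevels s (k + 1) := by
    rw [nuqLevels_succ, nuqLevels_succ, pow_succ]; ring
  rw [levelVariance, h, hgap, ← nuqLevels_succ]
  nlinarith [sq_nonneg (2 * r - 3 * nuqLevels s (k + 1))]

/-- The constant `3/4` is forced by `k = 1`; it becomes the term `3(s-1)/16` of the bound. -/
lemma sq_two_pow_le (k : ℕ) : ((2:ℝ) ^ k) ^ 2 ≤ 1 + 3 * k / 4 * ((2:ℝ) ^ k) ^ 2 := by
  match k with
  | 0 => norm_num
  | 1 => norm_num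
  | k + 2 =>
    have : (1:ℝ) ≤ 3 * ((k + 2 : ℕ) : ℝ) / 4 := by push_cast; linarith [k.cast_nonneg (α := ℝ)]
    nlinarith [sq_nonneg ((2:ℝ) ^ (k + 2))]

lemma levelVariance_nuqLevels_le {s : ℕ} (hs : 1 ≤ s) {r : ℝ} (hr0 : 0 ≤ r) :
    levelVariance (nuqLevels s) s r ≤ ((2:ℝ) ^ s)⁻¹ ^ 2 / 4 + 3 * ((s:ℝ) - 1) / 16 * r ^ 2 := by
  have hc : 0 ≤ 3 * ((s:ℝ) - 1) / 16 := by
    have : (1:ℝ) ≤ s := by exact_mod_cast hs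
    linarith
  set t := ((2:ℝ) ^ s)⁻¹
  cases h : levIdx (nuqLevels s) s r with
  | zero =>
    rw [levelVariance_nuqLevels_of_levIdx_eq_zero h, div_eq_mul_inv]
    nlinarith [sq_nonneg (r - t / 2), mul_nonneg hc (sq_nonneg r)]
  | succ k =>
    have hks : (k : ℝ) ≤ s - 1 := by
      have := levIdx_le (nuqLevels s) s r
      rw [h] at this
      rw [le_sub_iff_add_le]
      exact_mod_cast this
    have hkr : 2 ^ k * t ≤ r := by
      have := (isLevels_nuqLevels s).level_levIdx_le hr0
      rwa [h, nuqLevels_succ, div_eq_mul_inv] at this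
    calc levelVariance (nuqLevels s) s r
        ≤ (2 ^ k * t) ^ 2 / 4 := by
          simpa only [div_eq_mul_inv] using levelVariance_nuqLevels_of_levIdx_eq_succ h
      _ ≤ t ^ 2 / 4 + 3 * k / 16 * (2 ^ k * t) ^ 2 := by
          nlinarith [sq_two_pow_le k, sq_nonneg t]
      _ ≤ t ^ 2 / 4 + 3 * ((s:ℝ) - 1) / 16 * r ^ 2 := by gcongr

lemma levelVariance_nuqLevels_le_sq_div_four {s : ℕ} {r : ℝ} (hr0 : 0 ≤ r)
    (h : levIdx (nuqLevels s) s r ≠ 0) : levelVariance (nuqLevels s) s r ≤ r ^ 2 / 4 := by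
  obtain ⟨k, hk⟩ := Nat.exists_eq_succ_of_ne_zero h
  have hkr : 2 ^ k / 2 ^ s ≤ r := by
    simpa only [hk, nuqLevels_succ] using (isLevels_nuqLevels s).level_levIdx_le hr0
  calc levelVariance (nuqLevels s) s r ≤ (2 ^ k / 2 ^ s) ^ 2 / 4 :=
        levelVariance_nuqLevels_of_levIdx_eq_succ hk
    _ ≤ r ^ 2 / 4 := by gcongr

section Sum

variable {ι : Type*} [Fintype ι] {s : ℕ} {r : ι → ℝ}

lemma sum_levelVariance_nuqLevels_le_left (hs : 1 ≤ s) (hr0 : ∀ i, 0 ≤ r i)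
    (hsum : ∑ i, r i ^ 2 = 1) :
    ∑ i, levelVariance (nuqLevels s) s (r i) ≤
      Fintype.card ι * ((2:ℝ) ^ s)⁻¹ ^ 2 / 4 + 3 * ((s:ℝ) - 1) / 16 := by
  calc ∑ i, levelVariance (nuqLevels s) s (r i)
      ≤ ∑ i, (((2:ℝ) ^ s)⁻¹ ^ 2 / 4 + 3 * ((s:ℝ) - 1) / 16 * r i ^ 2) :=
        Finset.sum_le_sum fun i _ => levelVariance_nuqLevels_le hs (hr0 i)
    _ = _ := by
        rw [Finset.sum_add_distrib, ← Finset.mul_sum, hsum, Finset.sum_const, Finset.card_univ,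
          nsmul_eq_mul]
        ring

lemma sum_levelVariance_nuqLevels_le_right (hr0 : ∀ i, 0 ≤ r i)
    (hsum : ∑ i, r i ^ 2 = 1) {z : ℝ} (hz : 0 ≤ z)
    (hcard : Fintype.card ι ≤ z ^ 2 + ((2:ℝ) ^ s) ^ 2) (hwz : (2:ℝ) ^ s ≤ 2 * z) :
    ∑ i, levelVariance (nuqLevels s) s (r i) ≤ z / 2 ^ s + 1 / 4 := by
  classical
  set w : ℝ := 2 ^ s
  set B := Finset.univ.filter fun i => levIdx (nuqLevels s) s (r i) = 0
  set ρ := ∑ i ∈ B, r i ^ 2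
  set S := ∑ i ∈ B, r i
  have hρ1 : ρ ≤ 1 := hsum ▸ Finset.sum_le_univ_sum_of_nonneg fun i => sq_nonneg (r i)
  have hρ0 : 0 ≤ ρ := Finset.sum_nonneg fun i _ => sq_nonneg (r i)
  have hS : S ≤ z + ρ * w := by
    have hS2 : S ^ 2 ≤ Fintype.card ι * ρ :=
      (sq_sum_le_card_mul_sum_sq).trans
        (mul_le_mul_of_nonneg_right (by exact_mod_cast Finset.card_le_univ B) hρ0)
    have hw : 0 ≤ w := by positivity
    have hS2' : S ^ 2 ≤ (z + ρ * w) ^ 2 := by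
      nlinarith [mul_le_mul_of_nonneg_right hcard hρ0, mul_nonneg (sub_nonneg.2 hρ1) (sq_nonneg z),
        mul_nonneg (mul_nonneg hρ0 hw) (sub_nonneg.2 hwz), sq_nonneg (ρ * w)]
    exact (pow_le_pow_iff_left₀ (Finset.sum_nonneg fun i _ => hr0 i) (by positivity)
      two_ne_zero).1 hS2'
  have hB : ∑ i ∈ B, levelVariance (nuqLevels s) s (r i) = S / w - ρ := by
    rw [Finset.sum_div, ← Finset.sum_sub_distrib]
    exact Finset.sum_congr rfl fun i hi =>
      levelVariance_nuqLevels_of_levIdx_eq_zero (Finset.mem_filter.1 hi).2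
  have hBc : ∑ i ∈ Finset.univ.filter (fun i => ¬levIdx (nuqLevels s) s (r i) = 0),
      levelVariance (nuqLevels s) s (r i) ≤ 1 / 4 :=
    calc _ ≤ ∑ i ∈ Finset.univ.filter (fun i => ¬levIdx (nuqLevels s) s (r i) = 0), r i ^ 2 / 4 :=
          Finset.sum_le_sum fun i hi =>
            levelVariance_nuqLevels_le_sq_div_four (hr0 i) (Finset.mem_filter.1 hi).2
      _ ≤ ∑ i, r i ^ 2 / 4 := Finset.sum_le_univ_sum_of_nonneg fun i => by positivity
      _ = 1 / 4 := by rw [← Finset.sum_div, hsum]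
  have hSw : S / w ≤ z / w + ρ := by
    rw [div_add' _ _ _ (by positivity)]
    gcongr
  rw [← Finset.sum_filter_add_sum_filter_not Finset.univ
    (fun i => levIdx (nuqLevels s) s (r i) = 0), hB]
  linarith

lemma sum_levelVariance_nuqLevels_le (hs : 1 ≤ s) (hr0 : ∀ i, 0 ≤ r i) (hsum : ∑ i, r i ^ 2 = 1)
    (hcard : (2:ℝ) ^ (2 * s) ≤ Fintype.card ι) :
    ∑ i, levelVariance (nuqLevels s) s (r i) ≤
      min ((2:ℝ) ^ (-(2 * (s:ℤ))) * ((Fintype.card ι : ℝ) - 2 ^ (2 * s)) / 4)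
          ((2:ℝ) ^ (-(s:ℤ)) * Real.sqrt ((Fintype.card ι : ℝ) - 2 ^ (2 * s))) +
        3 * ((s:ℝ) - 1) / 16 + 1 / 4 := by
  have hc : 0 ≤ 3 * ((s:ℝ) - 1) / 16 := by
    have : (1:ℝ) ≤ s := by exact_mod_cast hs
    linarith
  have e1 : (2:ℝ) ^ (-(2 * (s:ℤ))) = ((2:ℝ) ^ s)⁻¹ ^ 2 := by
    rw [inv_pow, ← pow_mul', ← zpow_natCast, ← zpow_neg]; push_cast; rfl
  have e2 : (2:ℝ) ^ (-(s:ℤ)) = ((2:ℝ) ^ s)⁻¹ := by rw [zpow_neg, zpow_natCast]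
  have hleft := sum_levelVariance_nuqLevels_le_left hs hr0 hsum
  rw [pow_mul'] at hcard
  rw [e1, e2, pow_mul']
  set w : ℝ := 2 ^ s
  set z := Real.sqrt ((Fintype.card ι : ℝ) - w ^ 2)
  have hw : 0 < w := by positivity
  have hz : 0 ≤ z := Real.sqrt_nonneg _
  have hz2 : z ^ 2 = Fintype.card ι - w ^ 2 := Real.sq_sqrt (sub_nonneg.2 hcard)
  have hcardw : (Fintype.card ι : ℝ) * w⁻¹ ^ 2 / 4 = w⁻¹ ^ 2 * z ^ 2 / 4 + 1 / 4 := by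
    rw [hz2]; field_simp; ring
  rw [← hz2]
  by_cases hwz : w ≤ 2 * z
  · have hright : ∑ i, levelVariance (nuqLevels s) s (r i) ≤ w⁻¹ * z + 1 / 4 := by
      rw [← div_eq_inv_mul]
      exact sum_levelVariance_nuqLevels_le_right hr0 hsum hz (by linarith) hwz
    rw [← min_add_add_right, ← min_add_add_right]
    exact le_min (by linarith) (by linarith)
  · have hzw : w⁻¹ * z < 1 / 2 := by rw [inv_mul_lt_iff₀ hw]; linarith
    have hmin : w⁻¹ ^ 2 * z ^ 2 / 4 ≤ w⁻¹ * z := by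
      nlinarith [mul_nonneg (inv_nonneg.2 hw.le) hz]
    rw [min_eq_left hmin]
    linarith

end Sum

lemma EuclideanSpace.sum_sq_abs_div_norm {ι : Type*} [Fintype ι] {v : EuclideanSpace ℝ ι}
    (hv : v ≠ 0) : ∑ i, (|v i| / ‖v‖) ^ 2 = 1 := by
  simp_rw [div_pow, sq_abs, ← Finset.sum_div, ← EuclideanSpace.real_norm_sq_eq]
  exact div_self (by positivity)

theorem nuq_variance_bound_large_d_general (d s : ℕ) (hs : 1 ≤ s)
    (hds : 2 ^ (2 * s) ≤ d)
    (v : EuclideanSpace ℝ (Fin d)) (hv : v ≠ 0) :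
    (∫ u, ‖quant (nuqLevels s) s v u - v‖ ^ 2 ∂(unifCube d)) ≤
      ‖v‖ ^ 2 *
        (min ((2:ℝ) ^ (-(2 * (s:ℤ))) * ((d:ℝ) - 2 ^ (2 * s)) / 4)
             ((2:ℝ) ^ (-(s:ℤ)) * Real.sqrt ((d:ℝ) - 2 ^ (2 * s))) +
          3 * ((s:ℝ) - 1) / 16 + 1 / 4) := by
  rw [integral_norm_quant_sub_sq (isLevels_nuqLevels s) hv]
  have hbound := sum_levelVariance_nuqLevels_le hs (fun i => by positivity)
    (EuclideanSpace.sum_sq_abs_div_norm hv) (by rw [Fintype.card_fin]; exact_mod_cast hds)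
  rw [Fintype.card_fin] at hbound
  exact mul_le_mul_of_nonneg_left hbound (sq_nonneg _)

/-- **Theorem 2, second part (variance bound for `2^{2s} ≤ d`)**: with the NUQSGD levels,
`E[‖Q_s(v) − v‖²] ≤ ‖v‖² (min{2^{-2s}(d − 2^{2s})/4, 2^{-s}√(d − 2^{2s})} + 3(s−1)/16 + 1/4)`. -/
theorem nuq_variance_bound_large_d (d s : ℕ) (hd : 1 ≤ d) (hs : 1 ≤ s)
    (hds : 2 ^ (2 * s) ≤ d)
    (v : EuclideanSpace ℝ (Fin d)) (hv : v ≠ 0) :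
    (∫ u, ‖quant (nuqLevels s) s v u - v‖ ^ 2 ∂(unifCube d)) ≤
      ‖v‖ ^ 2 *
        (min ((2:ℝ) ^ (-(2 * (s:ℤ))) * ((d:ℝ) - 2 ^ (2 * s)) / 4)
             ((2:ℝ) ^ (-(s:ℤ)) * Real.sqrt ((d:ℝ) - 2 ^ (2 * s))) +
          3 * ((s:ℝ) - 1) / 16 + 1 / 4) :=
  nuq_variance_bound_large_d_general d s hs hds v hv
end
end

section
/- Let d ≥ 1 and s ≥ 1 be integers and let L = (l_0, l_1, …, l_{s+1}) be any sequence of quantization levels. If d ≥ (2/l_1)², then every constant vector v = (r, r, …, r) ∈ ℝ^d with r ≠ 0 satisfies E[‖Q_s(v) − v‖²] ≥ ‖v‖² · l_1 · √d / 2; in particular, there exists a nonzero vector whose quantization variance is at least ‖v‖² l_1 √d / 2, so the variance is Ω(√d) in the dimension. -/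
/-!
For the constant vector every normalized coordinate equals `1/√d`, which lies below `l₁` once
`√d · l₁ > 1`. So each coordinate is independently rounded to `‖v‖ · sign r · l₁ = √d · r · l₁`
with probability `1/(√d · l₁)` and to `0` otherwise, and the expected squared error is exactly
`d r² (√d · l₁ − 1) = ‖v‖² (√d · l₁ − 1)`. This is at least `‖v‖² · √d · l₁ / 2` as soon as
`√d · l₁ ≥ 2`, which is the hypothesis `d ≥ (2/l₁)²`.
-/

open MeasureTheory Real

noncomputable section

open Set

instance : IsProbabilityMeasure (volume.restrict (Icc (0 : ℝ) 1)) := ⟨by simp⟩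

instance inst_s9 (d : ℕ) : IsProbabilityMeasure (unifCube d) := by
  unfold unifCube; infer_instance

lemma integrable_ite_le {E : Type*} [NormedAddCommGroup E] {μ : Measure ℝ} [IsFiniteMeasure μ]
    (p : ℝ) (A B : E) : Integrable (fun x => if x ≤ p then A else B) μ :=
  .of_bound
    (stronglyMeasurable_const.ite measurableSet_Iic stronglyMeasurable_const).aestronglyMeasurable
    (max ‖A‖ ‖B‖) (ae_of_all _ fun _ => by split_ifs <;> simp)

lemma setIntegral_Icc_ite_le {E : Type*} [NormedAddCommGroup E] [NormedSpace ℝ E]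
    [CompleteSpace E] {p : ℝ} (hp : p ∈ Icc (0 : ℝ) 1) (A B : E) :
    ∫ x in Icc (0 : ℝ) 1, (if x ≤ p then A else B) = p • A + (1 - p) • B := by
  have hint : IntegrableOn (fun x : ℝ => if x ≤ p then A else B) (Icc 0 1) :=
    integrable_ite_le p A B
  have hA : EqOn (fun x : ℝ => if x ≤ p then A else B) (fun _ => A) (Icc 0 p) :=
    fun x hx => if_pos hx.2
  have hB : EqOn (fun x : ℝ => if x ≤ p then A else B) (fun _ => B) (Ioc p 1) :=
    fun x hx => if_neg (not_le.2 hx.1)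
  rw [← Icc_union_Ioc_eq_Icc hp.1 hp.2] at hint ⊢
  rw [setIntegral_union ((Iic_disjoint_Ioc le_rfl).mono_left Icc_subset_Iic_self) measurableSet_Ioc
      hint.left_of_union hint.right_of_union,
    setIntegral_congr_fun measurableSet_Icc hA, setIntegral_congr_fun measurableSet_Ioc hB]
  simp [hp.1, hp.2]

lemma integral_sum_comp_eval_unifCube {d : ℕ} {g : ℝ → ℝ} (hg : IntegrableOn g (Icc 0 1)) :
    ∫ u, ∑ i, g (u i) ∂unifCube d = d * ∫ x in Icc (0 : ℝ) 1, g x := by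
  unfold unifCube
  rw [integral_finsetSum _ fun i _ =>
    integrable_comp_eval (μ := fun _ => volume.restrict (Icc (0 : ℝ) 1)) (i := i) hg]
  simp [integral_comp_eval (μ := fun _ => volume.restrict (Icc (0 : ℝ) 1))
    hg.aestronglyMeasurable]

lemma Real.abs_mul_sign (r : ℝ) : |r| * Real.sign r = r := by
  rcases lt_trichotomy r 0 with h | rfl | h
  · rw [Real.sign_of_neg h, abs_of_neg h]; ring
  · simp
  · rw [Real.sign_of_pos h, abs_of_pos h, mul_one]

lemma EuclideanSpace.norm_of_forall_eq {ι : Type*} [Fintype ι] {v : EuclideanSpace ℝ ι} {r : ℝ}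
    (hv : ∀ i, v i = r) : ‖v‖ = √(Fintype.card ι) * |r| := by
  simp [EuclideanSpace.norm_eq, hv, sq_abs, Real.sqrt_mul (Nat.cast_nonneg _), Real.sqrt_sq_eq_abs]

namespace IsLevels

variable {l : ℕ → ℝ} {s : ℕ}

lemma strictMonoOn (hl : IsLevels l s) : StrictMonoOn l (Iic (s + 1)) :=
  strictMonoOn_Iic_of_lt_succ fun m hm => hl.2.2 m (Nat.lt_succ_iff.1 hm)

lemma levIdx_eq_zero (hl : IsLevels l s) {x : ℝ} (hx0 : 0 ≤ x) (hx : x < l 1) :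
    levIdx l s x = 0 := by
  suffices {j | j ≤ s ∧ l j ≤ x} = {0} by rw [levIdx, this, csSup_singleton]
  ext j
  refine ⟨fun ⟨hjs, hjx⟩ => ?_, fun hj => ?_⟩
  · by_contra hj
    have : l 1 ≤ l j := hl.strictMonoOn.monotoneOn (by simp) (by simp; omega)
      (Nat.one_le_iff_ne_zero.2 hj)
    linarith
  · rw [mem_singleton_iff.1 hj]
    exact ⟨Nat.zero_le s, hl.1 ▸ hx0⟩

lemma quantP_eq_div (hl : IsLevels l s) {x : ℝ} (hx0 : 0 ≤ x) (hx : x < l 1) :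
    quantP l s x = x / l 1 := by
  simp [quantP, hl.levIdx_eq_zero hx0 hx, hl.1]

end IsLevels

lemma quant_apply_of_lt {l : ℕ → ℝ} {s d : ℕ} (hl : IsLevels l s) (v : EuclideanSpace ℝ (Fin d))
    (u : Fin d → ℝ) {i : Fin d} (hi : |v i| / ‖v‖ < l 1) :
    quant l s v u i = if u i ≤ |v i| / ‖v‖ / l 1 then ‖v‖ * Real.sign (v i) * l 1 else 0 := by
  have hx0 : 0 ≤ |v i| / ‖v‖ := by positivity
  simp [quant, hl.levIdx_eq_zero hx0 hi, hl.quantP_eq_div hx0 hi, hl.1]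

section ConstantVector

variable {l : ℕ → ℝ} {s d : ℕ} {v : EuclideanSpace ℝ (Fin d)} {r : ℝ}

lemma quant_sub_apply_of_forall_eq (hl : IsLevels l s) (hv : ∀ i, v i = r) (hr : r ≠ 0)
    (hd : 1 < √d * l 1) (u : Fin d → ℝ) (i : Fin d) :
    (quant l s v u - v) i = if u i ≤ (√d * l 1)⁻¹ then r * (√d * l 1 - 1) else -r := by
  have hnorm : ‖v‖ = √d * |r| := by simpa using EuclideanSpace.norm_of_forall_eq hv
  have hsqrt : √d ≠ 0 := by rintro h0; simp [h0] at hd; linarith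
  have hratio : |v i| / ‖v‖ = (√d)⁻¹ := by
    rw [hv, hnorm]; field_simp [abs_ne_zero.2 hr]
  have hlt : |v i| / ‖v‖ < l 1 := by
    rwa [hratio, inv_lt_iff_one_lt_mul₀ (by positivity), mul_comm]
  rw [PiLp.sub_apply, quant_apply_of_lt hl v u hlt, hratio, hv, hnorm, mul_assoc √d,
    Real.abs_mul_sign, div_eq_mul_inv, ← mul_inv]
  split_ifs <;> ring

lemma integral_norm_quant_sub_sq_of_forall_eq (hl : IsLevels l s) (hv : ∀ i, v i = r)
    (hr : r ≠ 0) (hd : 1 < √d * l 1) :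
    ∫ u, ‖quant l s v u - v‖ ^ 2 ∂unifCube d = d * r ^ 2 * (√d * l 1 - 1) := by
  have hcoord : ∀ u, ‖quant l s v u - v‖ ^ 2 = ∑ i,
      (fun x => if x ≤ (√d * l 1)⁻¹ then (r * (√d * l 1 - 1)) ^ 2 else r ^ 2) (u i) := by
    intro u
    rw [EuclideanSpace.real_norm_sq_eq]
    refine Finset.sum_congr rfl fun i _ => ?_
    rw [quant_sub_apply_of_forall_eq hl hv hr hd]
    beta_reduce
    split_ifs <;> ring
  have ha : √d * l 1 ≠ 0 := (zero_lt_one.trans hd).ne'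
  simp_rw [hcoord]
  rw [integral_sum_comp_eval_unifCube (integrable_ite_le _ _ _),
    setIntegral_Icc_ite_le ⟨by positivity, inv_le_one_of_one_le₀ hd.le⟩]
  generalize √(d : ℝ) * l 1 = a at ha ⊢
  rw [smul_eq_mul, smul_eq_mul]
  field_simp
  ring

end ConstantVector

theorem nuq_variance_lower_bound_general (d s : ℕ)
    (l : ℕ → ℝ) (hl : IsLevels l s)
    (hdl : (2 / l 1) ^ 2 ≤ (d:ℝ))
    (r : ℝ) (hr : r ≠ 0)
    (v : EuclideanSpace ℝ (Fin d)) (hv : ∀ i, v i = r) :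
    ‖v‖ ^ 2 * l 1 * Real.sqrt d / 2 ≤
      ∫ u, ‖quant l s v u - v‖ ^ 2 ∂(unifCube d) := by
  have hl1 : 0 < l 1 := hl.1 ▸ hl.2.2 0 (Nat.zero_le s)
  have ha : 2 ≤ √d * l 1 := (div_le_iff₀ hl1).1 (Real.le_sqrt_of_sq_le hdl)
  have hnorm : ‖v‖ ^ 2 = d * r ^ 2 := by
    simp [EuclideanSpace.norm_of_forall_eq hv, mul_pow, sq_abs]
  rw [integral_norm_quant_sub_sq_of_forall_eq hl hv hr (by linarith), hnorm]
  nlinarith [mul_nonneg (mul_nonneg d.cast_nonneg (sq_nonneg r))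
    (by linarith : (0 : ℝ) ≤ √d * l 1 - 2)]

/-- **Theorem 4 (Lower bound)**: for any sequence of quantization levels, if `d ≥ (2/l₁)²`
then every nonzero constant vector `v = (r, …, r)` satisfies
`E[‖Q_s(v) − v‖²] ≥ ‖v‖² l₁ √d / 2`; in particular the worst-case variance is `Ω(√d)`. -/
theorem nuq_variance_lower_bound (d s : ℕ) (hd : 1 ≤ d) (hs : 1 ≤ s)
    (l : ℕ → ℝ) (hl : IsLevels l s)
    (hdl : (2 / l 1) ^ 2 ≤ (d:ℝ))
    (r : ℝ) (hr : r ≠ 0)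
    (v : EuclideanSpace ℝ (Fin d)) (hv : ∀ i, v i = r) :
    ‖v‖ ^ 2 * l 1 * Real.sqrt d / 2 ≤
      ∫ u, ‖quant l s v u - v‖ ^ 2 ∂(unifCube d) :=
  nuq_variance_lower_bound_general d s l hl hdl r hr v hv
end
end
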